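/- arXiv:0705.3573 — 8 statements merged into one kernel-verified Lean document; each statement's English description precedes it below -/
import Mathlib

section
/- Let K be a field of characteristic different from 2, let n be a positive integer, and let D ∈ Mat_n(K) be a nonzero symmetric matrix. The quadratic form x ↦ xᵀDx on Kⁿ is isomorphic to a scaled trace form over K if and only if there exists a symmetric matrix A ∈ Mat_n(K) such that the characteristic polynomial of the product AD is separable and irreducible over K. -/
universe u v

/-- The scaled trace form `x ↦ Tr_{F/K}(α·x²)` on `F` viewed as a `K`-vector space. -/
noncomputable def scaledTraceForm (K F : Type*) [Field K] [Field F] [Algebra K F] (α : F) :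
    QuadraticForm K F :=
  LinearMap.BilinMap.toQuadraticMap
    ((Algebra.traceForm K F).compl₁₂ (LinearMap.mulLeft K α) LinearMap.id)

/-- `Q` is (isomorphic to) a scaled trace form over `K`: there are a finite separable field
extension `F/K` and a nonzero `α ∈ F` such that `Q` is equivalent to `x ↦ Tr_{F/K}(α·x²)`. -/
def IsScaledTraceForm {K : Type u} [Field K] {V : Type v} [AddCommGroup V] [Module K V]
    (Q : QuadraticForm K V) : Prop :=
  ∃ (F : Type u) (_ : Field F) (_ : Algebra K F),
    FiniteDimensional K F ∧ Algebra.IsSeparable K F ∧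
      ∃ α : F, α ≠ 0 ∧ QuadraticMap.Equivalent Q (scaledTraceForm K F α)

/-!
If `xᵀDx` is isometric to `Tr_{F/K}(α x²)`, polarization (`2 ≠ 0`) identifies `xᵀDy` with
`Tr(α x y)`, which is nondegenerate, so `D` is invertible; multiplication by a primitive element
`θ` of `F/K` is then self-adjoint, i.e. of the form `A D` with `A` symmetric, and its
characteristic polynomial is the minimal polynomial of `θ`.

Conversely, if `T = A D` has a separable irreducible characteristic polynomial `p`, the field
`F = K[X]/(p)` acts on `Kⁿ` through `T` by self-adjoint maps, and for any `v ≠ 0` the orbit map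
`f ↦ f(T) v` is an isomorphism `F ≃ Kⁿ` (injective since `F` is a field, and `[F : K] = n`).
It pulls `xᵀDy` back to `(f, g) ↦ L(f g)` with `L(h) = vᵀ D h(T) v`, and the nondegeneracy of
the trace form of the separable extension `F/K` writes `L = Tr(α ·)`.
-/

open Polynomial Module
open LinearMap (BilinForm IsAdjointPair)

theorem LinearMap.BilinForm.apply_apply_of_isometryEquiv {R M M' : Type*} [CommRing R]
    [AddCommGroup M] [Module R M] [AddCommGroup M'] [Module R M']
    {B : BilinForm R M} {B' : BilinForm R M'} (h2 : IsLeftRegular (2 : R))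
    (hB : B.IsSymm) (hB' : B'.IsSymm)
    (e : B.toQuadraticMap.IsometryEquiv B'.toQuadraticMap) (x y : M) :
    B' (e x) (e y) = B x y := by
  refine h2 ?_
  calc 2 * B' (e x) (e y) = QuadraticMap.polar B'.toQuadraticMap (e x) (e y) := by
        rw [LinearMap.BilinMap.polar_toQuadraticMap, hB'.eq (e y), two_mul]
    _ = QuadraticMap.polar B.toQuadraticMap x y := by
        simp only [QuadraticMap.polar, ← map_add, e.map_app]
    _ = 2 * B x y := by
        rw [LinearMap.BilinMap.polar_toQuadraticMap, hB.eq y, two_mul]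

theorem LinearMap.IsAdjointPair.aeval {R M : Type*} [CommRing R] [AddCommGroup M] [Module R M]
    {B : BilinForm R M} {T : Module.End R M} (hT : IsAdjointPair B B T T) (q : R[X]) :
    IsAdjointPair B B (aeval T q) (aeval T q) := by
  have hpow : ∀ k : ℕ, IsAdjointPair B B ⇑(T ^ k) ⇑(T ^ k) := by
    intro k
    induction k with
    | zero => exact LinearMap.isAdjointPair_one
    | succ k ih =>
      have := ih.mul hT
      rwa [← pow_succ, ← pow_succ'] at this
  induction q using Polynomial.induction_on' with
  | add p q hp hq => rw [map_add]; exact hp.add hq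
  | monomial k a =>
    simpa only [aeval_monomial, Algebra.algebraMap_eq_smul_one, smul_mul_assoc, one_mul,
      LinearMap.coe_smul] using (hpow k).smul a

section ScaledTrace

variable (K F : Type*) [Field K] [Field F] [Algebra K F]

noncomputable def scaledTraceBilin (α : F) : BilinForm K F :=
  (Algebra.traceForm K F).compl₁₂ (LinearMap.mulLeft K α) LinearMap.id

variable {K F}

theorem scaledTraceBilin_apply (α x y : F) :
    scaledTraceBilin K F α x y = Algebra.trace K F (α * (x * y)) := by
  simp only [scaledTraceBilin, LinearMap.compl₁₂_apply, LinearMap.mulLeft_apply,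
    LinearMap.id_coe, id_eq, Algebra.traceForm_apply, mul_assoc]

theorem scaledTraceBilin_isSymm (α : F) : (scaledTraceBilin K F α).IsSymm :=
  ⟨fun x y ↦ by rw [scaledTraceBilin_apply, scaledTraceBilin_apply, mul_comm x]⟩

variable [FiniteDimensional K F] [Algebra.IsSeparable K F]

theorem scaledTraceBilin_separatingLeft {α : F} (hα : α ≠ 0) :
    (scaledTraceBilin K F α).SeparatingLeft := by
  intro x hx
  have hαx : α * x = 0 := (traceForm_nondegenerate K F).1 (α * x) fun y ↦ by
    simpa only [scaledTraceBilin_apply, Algebra.traceForm_apply, mul_assoc] using hx y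
  exact (mul_eq_zero.mp hαx).resolve_left hα

theorem Algebra.exists_forall_trace_mul_eq (L : Dual K F) :
    ∃ α : F, ∀ x, Algebra.trace K F (α * x) = L x :=
  ⟨((traceForm K F).toDual (traceForm_nondegenerate K F)).symm L, fun x ↦ by
    rw [← traceForm_apply, LinearMap.BilinForm.apply_toDual_symm_apply]⟩

end ScaledTrace

theorem PowerBasis.charpoly_lmul_gen {K S : Type*} [Field K] [CommRing S] [Algebra K S]
    [Module.Finite K S] (pb : PowerBasis K S) :
    (Algebra.lmul K S pb.gen).charpoly = minpoly K pb.gen := by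
  rw [← LinearMap.charpoly_toMatrix _ pb.basis, ← Algebra.leftMulMatrix_apply,
    charpoly_leftMulMatrix]

theorem AdjoinRoot.isSeparable_of_separable {K : Type*} [Field K] {p : K[X]}
    [Fact (Irreducible p)] (hp : p.Separable) : Algebra.IsSeparable K (AdjoinRoot p) := by
  have hroot : IsSeparable K (root p) :=
    hp.of_dvd (minpoly.dvd K _ (by rw [aeval_eq, mk_self]))
  rw [← AlgEquiv.Algebra.isSeparable_iff
    ((IntermediateField.equivOfEq (IntermediateField.adjoin_root_eq_top p)).trans
      IntermediateField.topEquiv)]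
  exact (IntermediateField.isSeparable_adjoin_simple_iff_isSeparable K _).mpr hroot

theorem AlgHom.bijective_applyₗ_comp {K F V : Type*} [Field K] [Field F] [Algebra K F]
    [FiniteDimensional K F] [AddCommGroup V] [Module K V] [FiniteDimensional K V]
    (φ : F →ₐ[K] Module.End K V) (hF : finrank K F = finrank K V) {v : V} (hv : v ≠ 0) :
    Function.Bijective ((LinearMap.applyₗ v).comp φ.toLinearMap) := by
  have hinj : Function.Injective ((LinearMap.applyₗ v).comp φ.toLinearMap) := by
    refine (injective_iff_map_eq_zero _).mpr fun f hf ↦ by_contra fun hf0 ↦ hv ?_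
    calc v = φ (f⁻¹ * f) v := by rw [inv_mul_cancel₀ hf0, map_one, Module.End.one_apply]
      _ = 0 := by
        rw [map_mul, Module.End.mul_apply]
        exact (congrArg (φ f⁻¹) hf).trans (map_zero _)
  exact ⟨hinj, (LinearMap.injective_iff_surjective_of_finrank_eq_finrank hF).mp hinj⟩

theorem isScaledTraceForm_of_isAdjointPair {K : Type u} [Field K] {V : Type v} [AddCommGroup V]
    [Module K V] [FiniteDimensional K V] {B : BilinForm K V} (hB : B ≠ 0) {T : Module.End K V}
    (hT : IsAdjointPair B B T T) (hsep : T.charpoly.Separable) (hirr : Irreducible T.charpoly) :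
    IsScaledTraceForm B.toQuadraticMap := by
  have := Fact.mk hirr
  have := (AdjoinRoot.powerBasis hirr.ne_zero).finite
  have := AdjoinRoot.isSeparable_of_separable hsep
  let φ : AdjoinRoot T.charpoly →ₐ[K] Module.End K V :=
    Ideal.Quotient.liftₐ _ (aeval T) fun q hq ↦ aeval_eq_zero_of_dvd_aeval_eq_zero
      (Ideal.mem_span_singleton.mp hq) T.aeval_self_charpoly
  have hφ (f : AdjoinRoot T.charpoly) : IsAdjointPair B B (φ f) (φ f) := by
    induction f using AdjoinRoot.induction_on with
    | ih q => exact hT.aeval q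
  have hdim : finrank K (AdjoinRoot T.charpoly) = finrank K V := by
    rw [(AdjoinRoot.powerBasis hirr.ne_zero).finrank, AdjoinRoot.powerBasis_dim,
      LinearMap.charpoly_natDegree]
  obtain ⟨v, hv⟩ : ∃ v : V, v ≠ 0 :=
    have : Nontrivial V := Module.nontrivial_of_finrank_pos (hdim ▸ finrank_pos)
    exists_ne 0
  let e := LinearEquiv.ofBijective _ (φ.bijective_applyₗ_comp hdim hv)
  obtain ⟨α, hα⟩ := Algebra.exists_forall_trace_mul_eq ((B v).comp e.toLinearMap)
  have hBe (f g) : B (e f) (e g) = scaledTraceBilin K _ α f g := by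
    rw [scaledTraceBilin_apply, hα]
    change B (φ f v) (φ g v) = B v (φ (f * g) v)
    rw [hφ, map_mul, Module.End.mul_apply]
  refine ⟨AdjoinRoot T.charpoly, inferInstance, inferInstance, inferInstance, inferInstance, α,
    ?_, .symm ⟨{ e with map_app' := fun f ↦ hBe f f }⟩⟩
  rintro rfl
  refine hB (LinearMap.ext₂ fun x y ↦ ?_)
  obtain ⟨f, rfl⟩ := e.surjective x
  obtain ⟨g, rfl⟩ := e.surjective y
  rw [hBe, scaledTraceBilin_apply, zero_mul, map_zero, LinearMap.zero_apply, LinearMap.zero_apply]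

theorem exists_isAdjointPair_of_isScaledTraceForm {K : Type u} [Field K] {V : Type v}
    [AddCommGroup V] [Module K V] [FiniteDimensional K V] (h2 : IsLeftRegular (2 : K))
    {B : BilinForm K V} (hB : B.IsSymm) (h : IsScaledTraceForm B.toQuadraticMap) :
    B.SeparatingLeft ∧ ∃ T : Module.End K V, IsAdjointPair B B T T ∧
      T.charpoly.Separable ∧ Irreducible T.charpoly := by
  obtain ⟨F, _, _, _, _, α, hα, ⟨e⟩⟩ := h
  let f : V ≃ₗ[K] F := e.toLinearEquiv
  have hBe (x y : V) : scaledTraceBilin K F α (f x) (f y) = B x y :=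
    LinearMap.BilinForm.apply_apply_of_isometryEquiv h2 hB (scaledTraceBilin_isSymm α) e x y
  let pb := Field.powerBasisOfFiniteOfSeparable K F
  let T := f.symm.conj (Algebra.lmul K F pb.gen)
  have hfT (x : V) : f (T x) = pb.gen * f x := f.apply_symm_apply _
  have hT : T.charpoly = minpoly K pb.gen := by
    rw [LinearEquiv.charpoly_conj, pb.charpoly_lmul_gen]
  refine ⟨fun x hx ↦ ?_, T, fun x y ↦ ?_, ?_, ?_⟩
  · have hfx : f x = 0 := scaledTraceBilin_separatingLeft (K := K) hα (f x) fun z ↦ by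
      obtain ⟨y, rfl⟩ := f.surjective z
      rw [hBe, hx]
    exact f.map_eq_zero_iff.mp hfx
  · rw [← hBe, ← hBe, hfT, hfT, scaledTraceBilin_apply, scaledTraceBilin_apply]
    congr 2
    ring
  · rw [hT]
    exact (Algebra.IsSeparable.isSeparable K pb.gen :)
  · rw [hT]
    exact minpoly.irreducible (Algebra.IsIntegral.isIntegral pb.gen)

namespace Matrix

variable {R n : Type*} [CommRing R] [Fintype n]

theorem IsSymm.isSelfAdjoint_mul {A D : Matrix n n R} (hA : A.IsSymm) (hD : D.IsSymm) :
    D.IsSelfAdjoint (A * D) := by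
  change (A * D)ᵀ * D = D * (A * D)
  rw [transpose_mul, hA.eq, hD.eq, Matrix.mul_assoc]

theorem exists_isSymm_mul_eq_of_isSelfAdjoint [DecidableEq n] {D M : Matrix n n R}
    (hD : D.IsSymm) (hdet : IsUnit D.det) (hM : D.IsSelfAdjoint M) :
    ∃ A : Matrix n n R, A.IsSymm ∧ A * D = M := by
  refine ⟨M * D⁻¹, ?_, by rw [Matrix.mul_assoc, nonsing_inv_mul _ hdet, Matrix.mul_one]⟩
  have hMt : Mᵀ = D * M * D⁻¹ := by
    rw [← show Mᵀ * D = D * M from hM, Matrix.mul_assoc, mul_nonsing_inv _ hdet, Matrix.mul_one]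
  change (M * D⁻¹)ᵀ = M * D⁻¹
  rw [transpose_mul, transpose_nonsing_inv, hD.eq, hMt, ← Matrix.mul_assoc, ← Matrix.mul_assoc,
    nonsing_inv_mul _ hdet, Matrix.one_mul]

end Matrix

theorem toQuadraticMap'_isScaledTraceForm_iff_general
    (K : Type u) [Field K] (hchar : ringChar K ≠ 2) (n : ℕ)
    (D : Matrix (Fin n) (Fin n) K) (hD : D.IsSymm) (hD0 : D ≠ 0) :
    IsScaledTraceForm D.toQuadraticMap' ↔
      ∃ A : Matrix (Fin n) (Fin n) K, A.IsSymm ∧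
        (A * D).charpoly.Separable ∧ Irreducible (A * D).charpoly := by
  constructor
  · intro h
    obtain ⟨hDsep, T, hT, hsep, hirr⟩ := exists_isAdjointPair_of_isScaledTraceForm
      (Ring.two_ne_zero hchar).isUnit.isRegular.left (Matrix.isSymm_toBilin'_iff_isSymm.mpr hD) h
    obtain ⟨A, hA, hAD⟩ := Matrix.exists_isSymm_mul_eq_of_isSelfAdjoint (M := T.toMatrix') hD
      (LinearMap.separatingLeft_toLinearMap₂'_iff_det_ne_zero.mp hDsep).isUnit
      ((isAdjointPair_toLinearMap₂' _ _ _ _).mp (by rwa [Matrix.toLin'_toMatrix']))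
    rw [← Matrix.toLin'_toMatrix' T, Matrix.charpoly_toLin', ← hAD] at hsep hirr
    exact ⟨A, hA, hsep, hirr⟩
  · rintro ⟨A, hA, hsep, hirr⟩
    refine isScaledTraceForm_of_isAdjointPair
      ((map_ne_zero_iff _ (Matrix.toLinearMap₂' K).injective).mpr hD0)
      ((isAdjointPair_toLinearMap₂' _ _ _ _).mpr (hA.isSelfAdjoint_mul hD)) ?_ ?_ <;>
    rwa [Matrix.charpoly_toLin']

/-- A nonzero symmetric matrix `D` represents a scaled trace form over `K` if and only if
there is a symmetric matrix `A` such that the characteristic polynomial of `A * D` is separable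
and irreducible over `K`. -/
theorem toQuadraticMap'_isScaledTraceForm_iff
    (K : Type u) [Field K] (hchar : ringChar K ≠ 2) (n : ℕ) (hn : 0 < n)
    (D : Matrix (Fin n) (Fin n) K) (hD : D.IsSymm) (hD0 : D ≠ 0) :
    IsScaledTraceForm D.toQuadraticMap' ↔
      ∃ A : Matrix (Fin n) (Fin n) K, A.IsSymm ∧
        (A * D).charpoly.Separable ∧ Irreducible (A * D).charpoly :=
  toQuadraticMap'_isScaledTraceForm_iff_general K hchar n D hD hD0
end

section
/- Let L be a field of characteristic different from 2 and let d₁, d₂ ∈ L be nonzero elements. Then the polynomial d₁²t₁₁² + d₂²t₂₂² + 4d₁d₂t₁₂² − 2d₁d₂t₁₁t₂₂ (in the indeterminates t₁₁, t₁₂, t₂₂) is not a square in the rational function field L(t₁₁, t₁₂, t₂₂). -/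
/-!
Since `L[t₁₁, t₁₂, t₂₂]` is a UFD, hence integrally closed, a square root of the polynomial in
the fraction field is already a polynomial. Specialising `t₁₁ ↦ 0, t₁₂ ↦ X, t₂₂ ↦ 1` then makes
`4d₁d₂X² + d₂²` a square in `L[X]`; but a square `(uX + v)²` of degree two has the linear
coefficient `2uv`, which vanishes only if `u` or `v` does.
-/

universe u

open MvPolynomial

theorem IsIntegrallyClosed.exists_pow_eq_of_pow_eq_algebraMap {R K : Type*} [CommRing R]
    [IsIntegrallyClosed R] [CommRing K] [Algebra R K] [IsFractionRing R K]
    {x : K} {r : R} {n : ℕ} (hn : 0 < n) (h : x ^ n = algebraMap R K r) :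
    ∃ y : R, y ^ n = r := by
  obtain ⟨y, rfl⟩ := IsIntegrallyClosed.exists_algebraMap_eq_of_isIntegral_pow hn
    (h ▸ isIntegral_algebraMap)
  exact ⟨y, IsFractionRing.injective R K (by rw [map_pow, h])⟩

namespace Polynomial

theorem not_isSquare_C_mul_X_sq_add_C {R : Type*} [CommRing R] [IsDomain R]
    (two_ne_zero : (2 : R) ≠ 0) {a b : R} (ha : a ≠ 0) (hb : b ≠ 0) :
    ¬ IsSquare (C a * X ^ 2 + C b) := by
  rintro ⟨s, hs⟩
  rw [← sq] at hs
  have hdeg : s.natDegree = 1 := by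
    have := congrArg natDegree hs
    rw [natDegree_add_C, natDegree_C_mul_X_pow 2 _ ha, natDegree_pow] at this
    omega
  obtain ⟨u, v, rfl⟩ := exists_eq_X_add_C_of_natDegree_le_one hdeg.le
  have hu : u ≠ 0 := by rintro rfl; simp at hdeg
  rw [show (C u * X + C v) ^ 2 = C (u ^ 2) * X ^ 2 + C (2 * u * v) * X + C (v ^ 2) by
    simp only [C_mul, C_pow, C_ofNat]; ring] at hs
  have hv : v ≠ 0 := by
    rintro rfl
    exact hb (by simpa [coeff_X, coeff_C] using congrArg (coeff · 0) hs)
  have huv : 2 * u * v = 0 := by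
    simpa [coeff_X, coeff_C, -map_pow] using (congrArg (coeff · 1) hs).symm
  exact mul_ne_zero (mul_ne_zero two_ne_zero hu) hv huv

end Polynomial

/-- Let `L` be a field of characteristic `≠ 2` and `d₁, d₂ ∈ L` nonzero. Then the polynomial
`d₁²t₁₁² + d₂²t₂₂² + 4d₁d₂t₁₂² − 2d₁d₂t₁₁t₂₂` is not a square in the rational function field
`L(t₁₁, t₁₂, t₂₂)` (here `t₁₁ = X 0`, `t₁₂ = X 1`, `t₂₂ = X 2`). -/
theorem discriminant_not_square (L : Type u) [Field L] (hchar : ringChar L ≠ 2)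
    (d₁ d₂ : L) (hd₁ : d₁ ≠ 0) (hd₂ : d₂ ≠ 0) :
    ¬ ∃ g : FractionRing (MvPolynomial (Fin 3) L),
      g ^ 2 = algebraMap (MvPolynomial (Fin 3) L) (FractionRing (MvPolynomial (Fin 3) L))
        (C (d₁ ^ 2) * X 0 ^ 2 + C (d₂ ^ 2) * X 2 ^ 2 + C (4 * (d₁ * d₂)) * X 1 ^ 2
          - C (2 * (d₁ * d₂)) * X 0 * X 2) := by
  rintro ⟨g, hg⟩
  obtain ⟨q, hq⟩ := IsIntegrallyClosed.exists_pow_eq_of_pow_eq_algebraMap two_pos hg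
  have two_ne_zero : (2 : L) ≠ 0 := Ring.two_ne_zero hchar
  have four_ne_zero : (4 : L) ≠ 0 := by
    simpa [show (4 : L) = 2 * 2 by norm_num] using two_ne_zero
  refine Polynomial.not_isSquare_C_mul_X_sq_add_C two_ne_zero
    (mul_ne_zero four_ne_zero (mul_ne_zero hd₁ hd₂)) (pow_ne_zero 2 hd₂)
    ⟨aeval ![0, Polynomial.X, 1] q, ?_⟩
  rw [← sq, ← map_pow, hq]
  simp only [map_sub, map_add, map_mul, map_pow, aeval_C, aeval_X, Polynomial.algebraMap_eq,
    Matrix.cons_val_zero, Matrix.cons_val_one, Matrix.cons_val_two, Matrix.head_cons,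
    Matrix.tail_cons]
  ring
end

section
/- Let G be a profinite group, let N ≤ N₀ ≤ G be closed subgroups with N normal in G, and let H be a continuous quotient of G (i.e., there is a continuous surjective homomorphism G → H of profinite groups) such that H and G/N have no common nontrivial continuous quotient. Then H is a continuous quotient of N₀. In particular, if H has an open subgroup of index n, then so does N₀. -/
/-!
The image `M = φ(N)` is a closed normal subgroup of `H`, and `H ⧸ M` is profinite, since in a
profinite group every closed subgroup is an intersection of open subgroups. It is a quotient
of `H`, and of `G ⧸ N` via `G → H → H ⧸ M`, so it is trivial: `φ` already maps `N`, hence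
`N₀`, onto `H`. Pulling back open subgroups along the surjection `N₀ → H` preserves indices.
-/

theorem totallySeparatedSpace_of_forall_ne_one_exists_isOpen_subgroup_notMem
    {Q : Type*} [Group Q] [TopologicalSpace Q] [SeparatelyContinuousMul Q]
    (h : ∀ q : Q, q ≠ 1 → ∃ U : Subgroup Q, IsOpen (U : Set Q) ∧ q ∉ U) :
    TotallySeparatedSpace Q := by
  refine totallySeparatedSpace_iff_exists_isClopen.mpr fun x y hxy ↦ ?_
  obtain ⟨U, hU, hxyU⟩ := h (x⁻¹ * y) (by simpa [inv_mul_eq_one] using hxy)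
  have hUclopen : IsClopen (U : Set Q) := ⟨U.isClosed_of_isOpen hU, hU⟩
  exact ⟨(x⁻¹ * ·) ⁻¹' U, hUclopen.preimage (continuous_const_mul _), by simp, hxyU⟩

theorem QuotientGroup.exists_isOpen_subgroup_notMem_of_ne_one
    {H : Type*} [Group H] [TopologicalSpace H] [IsTopologicalGroup H] [CompactSpace H]
    [TotallyDisconnectedSpace H] (M : Subgroup H) [M.Normal] (hM : IsClosed (M : Set H))
    {q : H ⧸ M} (hq : q ≠ 1) :
    ∃ U : Subgroup (H ⧸ M), IsOpen (U : Set (H ⧸ M)) ∧ q ∉ U := by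
  obtain ⟨h, rfl⟩ := QuotientGroup.mk_surjective q
  have hhM : h ∉ M := fun hh ↦ hq ((QuotientGroup.eq_one_iff h).mpr hh)
  rw [show M = (⟨M, hM⟩ : ClosedSubgroup H) from rfl,
    ProfiniteGrp.closedSubgroup_eq_sInf_open, Subgroup.mem_sInf] at hhM
  push Not at hhM
  obtain ⟨V, ⟨hVopen, hMV⟩, hhV⟩ := hhM
  refine ⟨V.map (QuotientGroup.mk' M), QuotientGroup.isOpenMap_coe _ hVopen, fun hhV' ↦ hhV ?_⟩
  replace hhV' : QuotientGroup.mk' M h ∈ V.map (QuotientGroup.mk' M) := hhV'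
  rwa [← Subgroup.mem_comap, Subgroup.comap_map_eq_self (by rwa [QuotientGroup.ker_mk'])] at hhV'

theorem QuotientGroup.totallyDisconnectedSpace_of_isClosed
    {H : Type*} [Group H] [TopologicalSpace H] [IsTopologicalGroup H] [CompactSpace H]
    [TotallyDisconnectedSpace H] (M : Subgroup H) [M.Normal] (hM : IsClosed (M : Set H)) :
    TotallyDisconnectedSpace (H ⧸ M) :=
  have := totallySeparatedSpace_of_forall_ne_one_exists_isOpen_subgroup_notMem fun _ ↦
    exists_isOpen_subgroup_notMem_of_ne_one M hM
  inferInstance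

theorem quotient_of_subgroup_of_no_common_quotient_general
    (G : Type u) [Group G] [TopologicalSpace G] [CompactSpace G]
    (N N₀ : Subgroup G) (hle : N ≤ N₀) [N.Normal]
    (hN : IsClosed (N : Set G))
    (H : Type u) [Group H] [TopologicalSpace H] [IsTopologicalGroup H]
    [CompactSpace H] [T2Space H] [TotallyDisconnectedSpace H]
    (φ : G →* H) (hφcont : Continuous φ) (hφsurj : Function.Surjective φ)
    (hcommon : ∀ (Q : Type u) [Group Q] [TopologicalSpace Q] [IsTopologicalGroup Q]
      [CompactSpace Q] [T2Space Q] [TotallyDisconnectedSpace Q],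
      (∃ ρ : H →* Q, Continuous ρ ∧ Function.Surjective ρ) →
      (∃ ψ : G →* Q, Continuous ψ ∧ Function.Surjective ψ ∧ N ≤ ψ.ker) →
      Subsingleton Q) :
    (∃ θ : N₀ →* H, Continuous θ ∧ Function.Surjective θ) ∧
      ∀ n : ℕ, (∃ U : Subgroup H, IsOpen (U : Set H) ∧ U.index = n) →
        ∃ U : Subgroup N₀, IsOpen (U : Set N₀) ∧ U.index = n := by
  set M := N.map φ
  have : M.Normal := ‹N.Normal›.map φ hφsurj
  -- `IsClosed` is a class; as a local instance `hM` makes `H ⧸ M` Hausdorff.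
  have hM : IsClosed (M : Set H) := by
    simpa only [M, Subgroup.coe_map] using (hN.isCompact.image hφcont).isClosed
  have := QuotientGroup.totallyDisconnectedSpace_of_isClosed M hM
  have hMtop : M = ⊤ := QuotientGroup.subgroup_eq_top_of_subsingleton M <|
    hcommon (H ⧸ M) ⟨_, continuous_quotient_mk', QuotientGroup.mk'_surjective M⟩
      ⟨(QuotientGroup.mk' M).comp φ, continuous_quotient_mk'.comp hφcont,
        (QuotientGroup.mk'_surjective M).comp hφsurj,
        by rw [← MonoidHom.comap_ker, QuotientGroup.ker_mk']; exact Subgroup.le_comap_map φ N⟩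
  have hθsurj : Function.Surjective (φ.domRestrict N₀) := by
    rw [← MonoidHom.range_eq_top, MonoidHom.domRestrict_range, eq_top_iff, ← hMtop]
    exact Subgroup.map_mono hle
  have hθcont : Continuous (φ.domRestrict N₀) := hφcont.comp continuous_subtype_val
  refine ⟨⟨_, hθcont, hθsurj⟩, fun n ⟨U, hU, hUn⟩ ↦ ?_⟩
  exact ⟨U.comap _, hU.preimage hθcont, (U.index_comap_of_surjective hθsurj).trans hUn⟩

/-- Let `G` be a profinite group, `N ≤ N₀ ≤ G` closed subgroups with `N` normal in `G`, and
`H` a continuous quotient of `G` such that `H` and `G/N` have no common nontrivial continuous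
quotient. Then `H` is a continuous quotient of `N₀`; in particular, if `H` has an open
subgroup of index `n`, then so does `N₀`. -/
theorem quotient_of_subgroup_of_no_common_quotient
    (G : Type u) [Group G] [TopologicalSpace G] [IsTopologicalGroup G]
    [CompactSpace G] [T2Space G] [TotallyDisconnectedSpace G]
    (N N₀ : Subgroup G) (hle : N ≤ N₀) [N.Normal]
    (hN : IsClosed (N : Set G)) (hN₀ : IsClosed (N₀ : Set G))
    (H : Type u) [Group H] [TopologicalSpace H] [IsTopologicalGroup H]
    [CompactSpace H] [T2Space H] [TotallyDisconnectedSpace H]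
    (φ : G →* H) (hφcont : Continuous φ) (hφsurj : Function.Surjective φ)
    (hcommon : ∀ (Q : Type u) [Group Q] [TopologicalSpace Q] [IsTopologicalGroup Q]
      [CompactSpace Q] [T2Space Q] [TotallyDisconnectedSpace Q],
      (∃ ρ : H →* Q, Continuous ρ ∧ Function.Surjective ρ) →
      (∃ ψ : G →* Q, Continuous ψ ∧ Function.Surjective ψ ∧ N ≤ ψ.ker) →
      Subsingleton Q) :
    (∃ θ : N₀ →* H, Continuous θ ∧ Function.Surjective θ) ∧
      ∀ n : ℕ, (∃ U : Subgroup H, IsOpen (U : Set H) ∧ U.index = n) →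
        ∃ U : Subgroup N₀, IsOpen (U : Set N₀) ∧ U.index = n :=
  quotient_of_subgroup_of_no_common_quotient_general G N N₀ hle hN H φ hφcont hφsurj hcommon
end

section
/- Let p be a prime and let m, k be positive integers with p ∤ m and p | φ(m), where φ is Euler's totient function. Let α ∈ (ℤ/mℤ)* be an element of multiplicative order p such that α − 1 is a unit in ℤ/mℤ, and let H = ℤ/mℤ ⋊ ℤ/p^kℤ be the semidirect product in which x ∈ ℤ/p^kℤ acts on ℤ/mℤ by multiplication by α^x. Then H is generated by its p-Sylow subgroups. -/
/-- The monoid homomorphism `AddAut A →* MulAut (Multiplicative A)`. -/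
def addAutToMulAut (A : Type*) [AddGroup A] : Multiplicative (AddAut A) →* MulAut (Multiplicative A) where
  toFun e := AddEquiv.toMultiplicative e.toAdd
  map_one' := rfl
  map_mul' _ _ := rfl

/-- The action of `ℤ/p^kℤ` on `ℤ/mℤ` in which `x` acts as multiplication by `α^x`, for a unit
`α` of `ℤ/mℤ` satisfying `α ^ (p^k) = 1`. -/
noncomputable def zmodSemidirectAction (m q : ℕ) (α : (ZMod m)ˣ) (h : α ^ q = 1) :
    Multiplicative (ZMod q) →* MulAut (Multiplicative (ZMod m)) :=
  ((addAutToMulAut (ZMod m)).comp (DistribMulAction.toAddAut (ZMod m)ˣ (ZMod m))).comp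
    (AddMonoidHom.toMultiplicativeLeft
      (ZMod.lift q ⟨zmultiplesHom (Additive (ZMod m)ˣ) (Additive.ofMul α), by
        simp only [zmultiplesHom_apply, ← ofMul_zpow, zpow_natCast, h]; rfl⟩))

/-- The group `H = ℤ/mℤ ⋊ ℤ/qℤ` (with `q = p^k`). -/
noncomputable abbrev zmodSemidirectProduct (m q : ℕ) (α : (ZMod m)ˣ) (h : α ^ q = 1) :=
  SemidirectProduct (Multiplicative (ZMod m)) (Multiplicative (ZMod q))
    (zmodSemidirectAction m q α h)

/-!
Every element of `H` is `inl a * inr x`. The factor `inr x` has order dividing `p ^ k`, so it lies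
in a Sylow `p`-subgroup. Since `1 - α` is a unit, `a = (1 - α) b` for some `b`, and then `inl a` is
the commutator of `inl b` with the generator `inr 1`: the product of a conjugate of `inr 1` and
`(inr 1)⁻¹`, both of which again have order dividing `p ^ k`.
-/

open scoped commutatorElement

theorem Subgroup.mem_iSup_sylow_of_pow_eq_one {G : Type*} [Group G] {p k : ℕ} {g : G}
    (hg : g ^ p ^ k = 1) : g ∈ ⨆ P : Sylow p G, (P : Subgroup G) := by
  have hpg : IsPGroup p (zpowers g) := by
    rw [isPGroup_iff_pow_pow_eq_one]
    rintro ⟨_, j, rfl⟩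
    refine ⟨k, Subtype.ext ?_⟩
    simp only [SubmonoidClass.coe_pow, OneMemClass.coe_one]
    rw [← zpow_natCast, ← zpow_mul, mul_comm, zpow_mul, zpow_natCast, hg, one_zpow]
  obtain ⟨P, hP⟩ := hpg.exists_le_sylow
  exact mem_iSup_of_mem P (hP (mem_zpowers g))

theorem commutatorElement_mem_iSup_sylow {G : Type*} [Group G] {p k : ℕ} (h : G) {g : G}
    (hg : g ^ p ^ k = 1) : ⁅h, g⁆ ∈ ⨆ P : Sylow p G, (P : Subgroup G) := by
  have hconj : (h * g * h⁻¹) ^ p ^ k = 1 := by rw [conj_pow, hg, mul_one, mul_inv_cancel]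
  rw [commutatorElement_def]
  exact mul_mem (Subgroup.mem_iSup_sylow_of_pow_eq_one hconj)
    (inv_mem (Subgroup.mem_iSup_sylow_of_pow_eq_one hg))

theorem SemidirectProduct.commutatorElement_inl_inr {N G : Type*} [Group N] [Group G]
    {φ : G →* MulAut N} (n : N) (g : G) :
    ⁅(inl n : N ⋊[φ] G), (inr g : N ⋊[φ] G)⁆ = inl (n * φ g n⁻¹) := by
  simp only [commutatorElement_def, map_mul, inl_aut, map_inv]
  group

theorem Multiplicative.zmod_pow_self {q : ℕ} (r : Multiplicative (ZMod q)) : r ^ q = 1 := by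
  rw [← ofAdd_toAdd r, ← ofAdd_nsmul, nsmul_eq_mul, ZMod.natCast_self, zero_mul, ofAdd_zero]

theorem zmodSemidirectAction_apply (m q : ℕ) (α : (ZMod m)ˣ) (h : α ^ q = 1) (x : ℤ)
    (b : ZMod m) :
    zmodSemidirectAction m q α h (.ofAdd (x : ZMod q)) (.ofAdd b) =
      .ofAdd (((α ^ x : (ZMod m)ˣ) : ZMod m) * b) := by
  simp only [zmodSemidirectAction, addAutToMulAut, MonoidHom.coe_comp, Function.comp_apply,
    AddMonoidHom.coe_toMultiplicativeLeft, toAdd_ofAdd, ZMod.lift_coe, zmultiplesHom_apply,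
    toMul_zsmul, toMul_ofMul, DistribMulAction.toAddAut_apply]
  rfl

namespace zmodSemidirectProduct

open SemidirectProduct Multiplicative

variable {m q : ℕ} {α : (ZMod m)ˣ} {h : α ^ q = 1}

theorem inr_pow_self (x : Multiplicative (ZMod q)) :
    (inr x : zmodSemidirectProduct m q α h) ^ q = 1 := by
  rw [← map_pow, zmod_pow_self, map_one]

theorem commutatorElement_inl_inr_one (b : ZMod m) :
    ⁅(inl (ofAdd b) : zmodSemidirectProduct m q α h),
      (inr (ofAdd (1 : ZMod q)) : zmodSemidirectProduct m q α h)⁆ =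
      inl (ofAdd ((1 - (α : ZMod m)) * b)) := by
  have hact := zmodSemidirectAction_apply m q α h 1 (-b)
  rw [Int.cast_one, zpow_one] at hact
  rw [commutatorElement_inl_inr, ← ofAdd_neg, hact, ← ofAdd_add]
  congr 2
  ring

end zmodSemidirectProduct

theorem zmodSemidirectProduct_generated_by_sylow_general
    (p m k : ℕ) (α : (ZMod m)ˣ)
    (hunit : IsUnit ((α : ZMod m) - 1)) (h1 : α ^ p ^ k = 1) :
    ⨆ P : Sylow p (zmodSemidirectProduct m (p ^ k) α h1),
      (P : Subgroup (zmodSemidirectProduct m (p ^ k) α h1)) = ⊤ := by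
  open SemidirectProduct zmodSemidirectProduct Multiplicative in
  rw [eq_top_iff]
  rintro g -
  rw [← inl_left_mul_inr_right g]
  refine mul_mem ?_ (Subgroup.mem_iSup_sylow_of_pow_eq_one (inr_pow_self _))
  obtain ⟨u, hu⟩ : IsUnit (1 - (α : ZMod m)) := by simpa using hunit.neg
  have hleft : g.left = ofAdd ((1 - (α : ZMod m)) * (↑u⁻¹ * g.left.toAdd)) := by
    rw [← hu, Units.mul_inv_cancel_left, ofAdd_toAdd]
  rw [hleft, ← commutatorElement_inl_inr_one]
  exact commutatorElement_mem_iSup_sylow _ (inr_pow_self _)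

/-- Let `p` be prime, `p ∤ m`, `p ∣ φ(m)`, and let `α ∈ (ℤ/mℤ)*` have order `p` with
`α - 1` a unit. Then `H = ℤ/mℤ ⋊ ℤ/p^kℤ` is generated by its `p`-Sylow subgroups. -/
theorem zmodSemidirectProduct_generated_by_sylow
    (p m k : ℕ) (hp : p.Prime) (hm : 0 < m) (hk : 0 < k)
    (hpm : ¬ p ∣ m) (hptot : p ∣ Nat.totient m)
    (α : (ZMod m)ˣ) (hord : orderOf α = p)
    (hunit : IsUnit ((α : ZMod m) - 1)) (h1 : α ^ p ^ k = 1) :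
    ⨆ P : Sylow p (zmodSemidirectProduct m (p ^ k) α h1),
      (P : Subgroup (zmodSemidirectProduct m (p ^ k) α h1)) = ⊤ :=
  zmodSemidirectProduct_generated_by_sylow_general p m k α hunit h1
end

section
/- Let p be a prime and let m, k be positive integers with p ∤ m and p | φ(m), where φ is Euler's totient function. Let α ∈ (ℤ/mℤ)* be an element of multiplicative order p such that α − 1 is a unit in ℤ/mℤ, and let H = ℤ/mℤ ⋊ ℤ/p^kℤ be the semidirect product in which x ∈ ℤ/p^kℤ acts on ℤ/mℤ by multiplication by α^x. Then the only quotient of H of order prime to p is the trivial group; that is, if N is a normal subgroup of H such that p does not divide the order of H/N, then N = H. -/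
/-!
The quotient map kills the complement `ℤ/p^kℤ`: its elements have `p`-power order, which must
also divide the order of the quotient, prime to `p`. Since `N` is normal, it then contains the
commutators `α • a - a = (α - 1) a` of the generator of `ℤ/p^kℤ` with elements `a` of `ℤ/mℤ`,
and these exhaust `ℤ/mℤ` because `α - 1` is a unit. So `N` contains both factors, hence all of `H`.
-/

theorem mem_of_pow_eq_one_of_coprime_card_quotient {G : Type*} [Group G] {N : Subgroup G}
    [N.Normal] {g : G} {n : ℕ} (hg : g ^ n = 1) (hn : n.Coprime (Nat.card (G ⧸ N))) : g ∈ N := by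
  rw [← QuotientGroup.eq_one_iff, ← orderOf_eq_one_iff]
  exact Nat.eq_one_of_dvd_coprimes hn
    (orderOf_dvd_of_pow_eq_one (by rw [← QuotientGroup.mk_pow, hg, QuotientGroup.mk_one]))
    (orderOf_dvd_natCard _)

namespace SemidirectProduct

variable {N G : Type*} [Group N] [Group G] {φ : G →* MulAut N} {K : Subgroup (N ⋊[φ] G)}

theorem inl_aut_mul_inv_mem (hK : K.Normal) {g : G} (hg : inr g ∈ K) (n : N) :
    inl (φ g n * n⁻¹) ∈ K := by
  have hconj := hK.conj_mem _ (K.inv_mem hg) (inl n)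
  simpa only [map_mul, inl_aut, map_inv, mul_assoc] using K.mul_mem hg hconj

theorem eq_top_of_inl_mem_of_inr_mem (hl : ∀ n, inl n ∈ K) (hr : ∀ g, inr g ∈ K) : K = ⊤ :=
  eq_top_iff.2 fun x _ => inl_left_mul_inr_right x ▸ K.mul_mem (hl _) (hr _)

end SemidirectProduct

theorem zmodSemidirectAction_ofAdd_intCast (m q : ℕ) (α : (ZMod m)ˣ) (h : α ^ q = 1) (x : ℤ)
    (a : ZMod m) :
    zmodSemidirectAction m q α h (.ofAdd x) (.ofAdd a) =
      .ofAdd (((α ^ x : (ZMod m)ˣ) : ZMod m) * a) := by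
  simp only [zmodSemidirectAction, MonoidHom.comp_apply,
    AddMonoidHom.toMultiplicativeLeft_apply_apply, toAdd_ofAdd, ZMod.lift_coe, addAutToMulAut,
    zmultiplesHom_apply, toMul_zsmul, toMul_ofMul, DistribMulAction.toAddAut_apply]
  rfl

theorem zmodSemidirectProduct_primeToP_quotient_trivial_general
    (p m k : ℕ) (hp : p.Prime)
    (α : (ZMod m)ˣ)
    (hunit : IsUnit ((α : ZMod m) - 1)) (h1 : α ^ p ^ k = 1)
    (N : Subgroup (zmodSemidirectProduct m (p ^ k) α h1)) (hN : N.Normal)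
    (hquot : ¬ p ∣ Nat.card (zmodSemidirectProduct m (p ^ k) α h1 ⧸ N)) :
    N = ⊤ := by
  have hcop : (p ^ k).Coprime (Nat.card (_ ⧸ N)) :=
    ((hp.coprime_iff_not_dvd).2 hquot).pow_left k
  have hinr (x : Multiplicative (ZMod (p ^ k))) : SemidirectProduct.inr x ∈ N := by
    refine mem_of_pow_eq_one_of_coprime_card_quotient ?_ hcop
    rw [← map_pow, ← ofAdd_toAdd x, ← ofAdd_nsmul, nsmul_eq_mul, ZMod.natCast_self, zero_mul,
      ofAdd_zero, map_one]
  have hinl (b : ZMod m) : SemidirectProduct.inl (.ofAdd b) ∈ N := by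
    obtain ⟨a, rfl⟩ : ∃ a, ((α : ZMod m) - 1) * a = b :=
      ⟨↑hunit.unit⁻¹ * b, by rw [← mul_assoc, hunit.mul_val_inv, one_mul]⟩
    have := SemidirectProduct.inl_aut_mul_inv_mem hN (hinr (.ofAdd ((1 : ℤ) : ZMod (p ^ k))))
      (.ofAdd a)
    rwa [zmodSemidirectAction_ofAdd_intCast, zpow_one, ← ofAdd_neg, ← ofAdd_add,
      ← sub_eq_add_neg, ← sub_one_mul] at this
  exact SemidirectProduct.eq_top_of_inl_mem_of_inr_mem (fun n => hinl n.toAdd) hinr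

/-- Let `p` be prime, `p ∤ m`, `p ∣ φ(m)`, and let `α ∈ (ℤ/mℤ)*` have order `p` with
`α - 1` a unit. Then the only quotient of `H = ℤ/mℤ ⋊ ℤ/p^kℤ` of order prime to `p` is
trivial: if `N ⊴ H` and `p ∤ |H/N|` then `N = H`. -/
theorem zmodSemidirectProduct_primeToP_quotient_trivial
    (p m k : ℕ) (hp : p.Prime) (hm : 0 < m) (hk : 0 < k)
    (hpm : ¬ p ∣ m) (hptot : p ∣ Nat.totient m)
    (α : (ZMod m)ˣ) (hord : orderOf α = p)
    (hunit : IsUnit ((α : ZMod m) - 1)) (h1 : α ^ p ^ k = 1)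
    (N : Subgroup (zmodSemidirectProduct m (p ^ k) α h1)) (hN : N.Normal)
    (hquot : ¬ p ∣ Nat.card (zmodSemidirectProduct m (p ^ k) α h1 ⧸ N)) :
    N = ⊤ :=
  zmodSemidirectProduct_primeToP_quotient_trivial_general p m k hp α hunit h1 N hN hquot
end

section
/- Let p be a prime and let m, k be positive integers with p ∤ m and p | φ(m), where φ is Euler's totient function. Let α ∈ (ℤ/mℤ)* be an element of multiplicative order p such that α − 1 is a unit in ℤ/mℤ, and let H = ℤ/mℤ ⋊ ℤ/p^kℤ be the semidirect product in which x ∈ ℤ/p^kℤ acts on ℤ/mℤ by multiplication by α^x. Then the elements (0,1) and (1,1) of H each have order exactly p^k, and together they generate H. -/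
/-!
Induction gives `(1,1)^n = (1 + α + ⋯ + α^(n-1), n)`. Multiplying the geometric sum by the unit
`α - 1` gives `α^(p^k) - 1 = 0`, so `(1,1)^(p^k) = 1`, while the projection onto `ℤ/p^kℤ` shows
that the order is at least `p^k`. Since `(1,1)(0,1)⁻¹ = (1,0)`, the subgroup generated by
`(0,1)` and `(1,1)` contains generators of both cyclic factors, hence is all of `H`.
-/

theorem geom_sum_eq_zero_of_pow_eq_one {R : Type*} [Ring R] {x : R} {n : ℕ} (hx : x ^ n = 1)
    (hx₁ : IsUnit (x - 1)) : ∑ i ∈ Finset.range n, x ^ i = 0 :=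
  hx₁.mul_left_eq_zero.mp (by rw [geom_sum_mul, hx, sub_self])

theorem ZMod.closure_ofAdd_one (n : ℕ) :
    Subgroup.closure {Multiplicative.ofAdd (1 : ZMod n)} = ⊤ := by
  rw [← Subgroup.zpowers_eq_closure, eq_top_iff]
  rintro a -
  exact ⟨(Multiplicative.toAdd a).cast, by simp [← ofAdd_zsmul]⟩

namespace SemidirectProduct

variable {N G : Type*} [Group N] [Group G] {φ : G →* MulAut N}

theorem closure_inr_mk_eq_top {n : N} {g : G} (hn : Subgroup.closure {n} = ⊤)
    (hg : Subgroup.closure {g} = ⊤) : Subgroup.closure {inr g, (⟨n, g⟩ : N ⋊[φ] G)} = ⊤ := by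
  set S := Subgroup.closure {inr g, (⟨n, g⟩ : N ⋊[φ] G)}
  have hinr : inr g ∈ S := Subgroup.subset_closure (by simp)
  have hinl : inl n ∈ S := by
    rw [← mul_inv_cancel_right (inl n) (inr g), ← mk_eq_inl_mul_inr]
    exact mul_mem (Subgroup.subset_closure (by simp)) (inv_mem hinr)
  have range_inl_le : (inl : N →* N ⋊[φ] G).range ≤ S := by
    rwa [MonoidHom.range_eq_map, ← hn, MonoidHom.map_closure, Set.image_singleton,
      Subgroup.closure_le, Set.singleton_subset_iff]
  have range_inr_le : (inr : G →* N ⋊[φ] G).range ≤ S := by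
    rwa [MonoidHom.range_eq_map, ← hg, MonoidHom.map_closure, Set.image_singleton,
      Subgroup.closure_le, Set.singleton_subset_iff]
  rw [eq_top_iff]
  rintro x -
  rw [← inl_left_mul_inr_right x]
  exact mul_mem (range_inl_le ⟨x.left, rfl⟩) (range_inr_le ⟨x.right, rfl⟩)

end SemidirectProduct

namespace zmodSemidirectProduct

open SemidirectProduct

variable {m q : ℕ} {α : (ZMod m)ˣ} {h : α ^ q = 1}

theorem action_ofAdd_natCast (n : ℕ) (a : ZMod m) :
    zmodSemidirectAction m q α h (Multiplicative.ofAdd (n : ZMod q)) (Multiplicative.ofAdd a) =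
      Multiplicative.ofAdd ((α : ZMod m) ^ n * a) := by
  rw [show ((n : ℕ) : ZMod q) = ((n : ℤ) : ZMod q) by push_cast; rfl]
  simp only [zmodSemidirectAction, addAutToMulAut, MonoidHom.coe_comp, Function.comp_apply,
    AddMonoidHom.coe_toMultiplicativeLeft, toAdd_ofAdd, ZMod.lift_coe, zmultiplesHom_apply,
    natCast_zsmul, toMul_nsmul, toMul_ofMul, DistribMulAction.toAddAut_apply]
  rw [← Units.val_pow_eq_pow_val]
  rfl

theorem mk_ofAdd_one_pow (n : ℕ) :
    (⟨Multiplicative.ofAdd 1, Multiplicative.ofAdd 1⟩ : zmodSemidirectProduct m q α h) ^ n =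
      ⟨Multiplicative.ofAdd (∑ i ∈ Finset.range n, (α : ZMod m) ^ i),
        Multiplicative.ofAdd (n : ZMod q)⟩ := by
  induction n with
  | zero => simp
  | succ n ih =>
    rw [pow_succ, ih, mul_def]
    ext
    · simp only [action_ofAdd_natCast, mul_one, Finset.sum_range_succ]
      rfl
    · simp only [Nat.cast_succ]
      rfl

theorem orderOf_inr_ofAdd_one :
    orderOf (inr (Multiplicative.ofAdd 1) : zmodSemidirectProduct m q α h) = q := by
  rw [orderOf_injective inr inr_injective, orderOf_ofAdd_eq_addOrderOf, ZMod.addOrderOf_one]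

theorem orderOf_mk_ofAdd_one (hα : IsUnit ((α : ZMod m) - 1)) :
    orderOf (⟨Multiplicative.ofAdd 1, Multiplicative.ofAdd 1⟩ :
      zmodSemidirectProduct m q α h) = q := by
  apply Nat.dvd_antisymm
  · apply orderOf_dvd_of_pow_eq_one
    have hαq : (α : ZMod m) ^ q = 1 := by rw [← Units.val_pow_eq_pow_val, h, Units.val_one]
    rw [mk_ofAdd_one_pow, geom_sum_eq_zero_of_pow_eq_one hαq hα, ZMod.natCast_self]
    rfl
  · simpa [orderOf_ofAdd_eq_addOrderOf] using
      orderOf_map_dvd rightHom (⟨Multiplicative.ofAdd 1, Multiplicative.ofAdd 1⟩ :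
        zmodSemidirectProduct m q α h)

end zmodSemidirectProduct

theorem zmodSemidirectProduct_generators_general
    (p m k : ℕ)
    (α : (ZMod m)ˣ)
    (hunit : IsUnit ((α : ZMod m) - 1)) (h1 : α ^ p ^ k = 1) :
    letI H := zmodSemidirectProduct m (p ^ k) α h1
    letI g₀ : H := SemidirectProduct.inr (Multiplicative.ofAdd (1 : ZMod (p ^ k)))
    letI g₁ : H := ⟨Multiplicative.ofAdd (1 : ZMod m), Multiplicative.ofAdd (1 : ZMod (p ^ k))⟩
    orderOf g₀ = p ^ k ∧ orderOf g₁ = p ^ k ∧ Subgroup.closure {g₀, g₁} = ⊤ :=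
  ⟨zmodSemidirectProduct.orderOf_inr_ofAdd_one, zmodSemidirectProduct.orderOf_mk_ofAdd_one hunit,
    SemidirectProduct.closure_inr_mk_eq_top (ZMod.closure_ofAdd_one m) (ZMod.closure_ofAdd_one _)⟩

/-- Let `p` be prime, `p ∤ m`, `p ∣ φ(m)`, and let `α ∈ (ℤ/mℤ)*` have order `p` with
`α - 1` a unit. Then in `H = ℤ/mℤ ⋊ ℤ/p^kℤ` the elements `(0,1)` and `(1,1)` each have
order exactly `p^k`, and together they generate `H`. -/
theorem zmodSemidirectProduct_generators
    (p m k : ℕ) (hp : p.Prime) (hm : 0 < m) (hk : 0 < k)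
    (hpm : ¬ p ∣ m) (hptot : p ∣ Nat.totient m)
    (α : (ZMod m)ˣ) (hord : orderOf α = p)
    (hunit : IsUnit ((α : ZMod m) - 1)) (h1 : α ^ p ^ k = 1) :
    letI H := zmodSemidirectProduct m (p ^ k) α h1
    letI g₀ : H := SemidirectProduct.inr (Multiplicative.ofAdd (1 : ZMod (p ^ k)))
    letI g₁ : H := ⟨Multiplicative.ofAdd (1 : ZMod m), Multiplicative.ofAdd (1 : ZMod (p ^ k))⟩
    orderOf g₀ = p ^ k ∧ orderOf g₁ = p ^ k ∧ Subgroup.closure {g₀, g₁} = ⊤ :=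
  zmodSemidirectProduct_generators_general p m k α hunit h1
end

section
/- There exists a prosolvable extension K of ℚ such that K has a field extension of degree 2, yet the non-degenerate quadratic form ⟨1,1⟩ over K, i.e., (x,y) ↦ x² + y², is not isomorphic to a scaled trace form over K. (One may take K = ℚ_sol ∩ ℝ, the fixed field of complex conjugation in the maximal prosolvable extension ℚ_sol of ℚ inside ℂ.) -/
universe u v

/-- A finite extension `L₀/K₀` is solvable if the Galois group of its Galois closure is a
solvable group. -/
def IsSolvableExtension (K₀ : Type u) (L₀ : Type v) [Field K₀] [Field L₀] [Algebra K₀ L₀] :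
    Prop :=
  IsSolvable (↥(IntermediateField.normalClosure K₀ L₀ (AlgebraicClosure L₀)) ≃ₐ[K₀]
    ↥(IntermediateField.normalClosure K₀ L₀ (AlgebraicClosure L₀)))

/-- `K/K₀` is prosolvable: every finite subextension `L₀/K₀` with `L₀ ⊆ K` is solvable. -/
def IsProsolvable (K₀ : Type u) (K : Type v) [Field K₀] [Field K] [Algebra K₀ K] : Prop :=
  ∀ L₀ : IntermediateField K₀ K, FiniteDimensional K₀ L₀ → IsSolvableExtension K₀ L₀

/-! `K = solvableByRad ℚ ℝ` is prosolvable because every element has a solvable minimal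
polynomial, and it is an ordered field in which every nonnegative element is a square.
A quadratic extension `F/K` is `K(√d)` with `d` not a square, so `d < 0` and `-1` is a square
in `F`, say `-1 = i²`. Then `Tr(α (i z)²) = -Tr(α z²)`, and a scaled trace form is not
identically zero, so it takes a negative value, which `x² + y²` never does. -/

open Module

theorem Matrix.toQuadraticForm'_one_nonneg {R n : Type*} [CommRing R] [LinearOrder R]
    [IsStrictOrderedRing R] [Fintype n] [DecidableEq n] (m : n → R) :
    0 ≤ (1 : Matrix n n R).toQuadraticForm' m := by
  simp only [Matrix.toQuadraticForm', LinearMap.BilinMap.toQuadraticMap_apply,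
    Matrix.toLinearMap₂'_apply', Matrix.one_mulVec, dotProduct]
  exact Finset.sum_nonneg fun i _ => mul_self_nonneg (m i)

section QuadraticExtension

variable {K F : Type*} [Field K] [Field F] [Algebra K F]

theorem exists_not_isSquare_isSquare_algebraMap_of_finrank_eq_two (h2 : (2 : K) ≠ 0)
    (hF : finrank K F = 2) : ∃ d : K, ¬ IsSquare d ∧ IsSquare (algebraMap K F d) := by
  have : FiniteDimensional K F := Module.finite_of_finrank_eq_succ hF
  obtain ⟨ζ, hζ⟩ : ∃ ζ : F, ζ ∉ (algebraMap K F).range := by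
    by_contra! h
    have := finrank_le_one (R := K) (1 : F) fun w =>
      (h w).elim fun c hc => ⟨c, by rw [Algebra.smul_def, mul_one, hc]⟩
    omega
  have hint : IsIntegral K ζ := .of_finite K ζ
  have hdeg : (minpoly K ζ).natDegree = 2 := by
    have hle := hF ▸ minpoly.natDegree_le (A := K) ζ
    have hpos := minpoly.natDegree_pos hint
    have hne : (minpoly K ζ).natDegree ≠ 1 := fun h => hζ (minpoly.natDegree_eq_one_iff.mp h)
    omega
  set b := (minpoly K ζ).coeff 1
  set c := (minpoly K ζ).coeff 0
  have hrel : ζ ^ 2 + algebraMap K F b * ζ + algebraMap K F c = 0 := by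
    have h := minpoly.aeval K ζ
    have hlead : (minpoly K ζ).coeff 2 = 1 := hdeg ▸ (minpoly.monic hint).coeff_natDegree
    rw [Polynomial.aeval_eq_sum_range, hdeg] at h
    simpa [Finset.sum_range_succ, hlead, Algebra.smul_def, add_comm, add_left_comm] using h
  have h2F : (2 : F) ≠ 0 := by
    rw [← map_ofNat (algebraMap K F) 2]
    exact (_root_.map_ne_zero _).mpr h2
  -- completing the square: `(2ζ + b)² = b² - 4c`
  refine ⟨b ^ 2 - 4 * c, ?_, 2 * ζ + algebraMap K F b, ?_⟩
  · rintro ⟨e, he⟩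
    have he' := congrArg (algebraMap K F) he
    simp only [map_sub, map_mul, map_pow, map_ofNat] at he'
    have hroots : (2 * ζ + algebraMap K F (b - e)) * (2 * ζ + algebraMap K F (b + e)) = 0 := by
      simp only [map_sub, map_add]
      linear_combination 4 * hrel + he'
    have hmem : ∀ s : K, 2 * ζ + algebraMap K F s = 0 → ζ ∈ (algebraMap K F).range :=
      fun s hs => ⟨-s / 2, by
        rw [map_div₀, map_neg, map_ofNat]
        field_simp
        linear_combination -hs⟩
    rcases mul_eq_zero.mp hroots with h | h <;> exact hζ (hmem _ h)
  · rw [map_sub, map_mul, map_pow, map_ofNat]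
    linear_combination -4 * hrel

theorem isSquare_neg_one_of_finrank_eq_two [LinearOrder K] [IsStrictOrderedRing K]
    (hK : ∀ x : K, 0 ≤ x → IsSquare x) (hF : finrank K F = 2) : IsSquare (-1 : F) := by
  obtain ⟨d, hd, ω, hω⟩ :=
    exists_not_isSquare_isSquare_algebraMap_of_finrank_eq_two two_ne_zero hF
  have hd_neg : d < 0 := lt_of_not_ge fun h => hd (hK d h)
  obtain ⟨c, hc⟩ := hK (-d) (by linarith)
  have hc0 : algebraMap K F c ≠ 0 := by
    rw [_root_.map_ne_zero]
    rintro rfl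
    linarith
  refine ⟨ω / algebraMap K F c, ?_⟩
  have hc' := congrArg (algebraMap K F) hc
  simp only [map_neg, map_mul] at hc'
  field_simp
  linear_combination hω + hc'

end QuadraticExtension

section ScaledTraceForm

variable {K F : Type*} [Field K] [Field F] [Algebra K F]

@[simp]
theorem scaledTraceForm_apply (α z : F) :
    scaledTraceForm K F α z = Algebra.trace K F (α * z * z) := rfl

/-- Since `-1 = i²`, `z ↦ i z` negates the form; it is nonzero by polarisation at `1` and `α⁻¹`. -/
theorem exists_scaledTraceForm_neg [LinearOrder K] [IsStrictOrderedRing K] [FiniteDimensional K F]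
    (hF : IsSquare (-1 : F)) {α : F} (hα : α ≠ 0) : ∃ z, scaledTraceForm K F α z < 0 := by
  obtain ⟨i, hi⟩ := hF
  have hneg : ∀ z, scaledTraceForm K F α (i * z) = -scaledTraceForm K F α z := fun z => by
    rw [scaledTraceForm_apply, scaledTraceForm_apply, ← map_neg]
    congr 1
    linear_combination -(α * z * z) * hi
  have hpolar : scaledTraceForm K F α (1 + α⁻¹) - scaledTraceForm K F α 1
      - scaledTraceForm K F α α⁻¹ = 2 * finrank K F := by
    have h : α * (1 + α⁻¹) * (1 + α⁻¹) - α * 1 * 1 - α * α⁻¹ * α⁻¹ = algebraMap K F 2 := by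
      rw [map_ofNat]
      field_simp
      ring
    simp only [scaledTraceForm_apply, ← map_sub, h, Algebra.trace_algebraMap, nsmul_eq_mul]
    ring
  obtain ⟨z, hz⟩ : ∃ z, scaledTraceForm K F α z ≠ 0 := by
    by_contra! h
    simp only [h, sub_zero] at hpolar
    have : (0 : K) < finrank K F := by exact_mod_cast finrank_pos
    linarith
  rcases hz.lt_or_gt with h | h
  · exact ⟨z, h⟩
  · exact ⟨i * z, by rw [hneg]; linarith⟩

theorem not_isScaledTraceForm_sumSquares [LinearOrder K] [IsStrictOrderedRing K]
    (hK : ∀ x : K, 0 ≤ x → IsSquare x) :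
    ¬ IsScaledTraceForm ((1 : Matrix (Fin 2) (Fin 2) K).toQuadraticForm') := by
  rintro ⟨F, _, _, _, -, α, hα, ⟨e⟩⟩
  have hF : finrank K F = 2 := by rw [← e.toLinearEquiv.finrank_eq, finrank_fin_fun]
  obtain ⟨z, hz⟩ :=
    exists_scaledTraceForm_neg (K := K) (isSquare_neg_one_of_finrank_eq_two hK hF) hα
  rw [← e.apply_symm_apply z, e.map_app] at hz
  exact hz.not_ge (Matrix.toQuadraticForm'_one_nonneg _)

end ScaledTraceForm

section Prosolvable

open Polynomial IntermediateField

variable {F K : Type*} [Field F] [Field K] [Algebra F K]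

theorem normalClosure_eq_adjoin_rootSet_minpoly {L : Type*} [Field L] [Algebra F L]
    [Algebra.IsAlgebraic F K] (splits : ∀ x : K, ((minpoly F x).map (algebraMap F L)).Splits)
    {α : K} (hα : F⟮α⟯ = ⊤) : normalClosure F K L = adjoin F ((minpoly F α).rootSet L) := by
  refine le_antisymm (normalClosure_le_iff.mpr fun f => ?_) ?_
  · rw [AlgHom.fieldRange_eq_map, ← hα, adjoin_map, Set.image_singleton, adjoin_simple_le_iff]
    refine subset_adjoin F _ (mem_rootSet.mpr ⟨minpoly.ne_zero ?_, ?_⟩)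
    · exact Algebra.IsIntegral.isIntegral α
    · rw [aeval_algHom_apply, minpoly.aeval, map_zero]
  · rw [Algebra.IsAlgebraic.normalClosure_eq_iSup_adjoin_of_splits splits]
    exact le_iSup (fun x : K => adjoin F ((minpoly F x).rootSet L)) α

theorem isSolvableExtension_of_adjoin_simple_eq_top [Algebra.IsAlgebraic F K] {α : K}
    (hα : F⟮α⟯ = ⊤) (h : Group.IsSolvable (minpoly F α).Gal) : IsSolvableExtension F K := by
  have hN := normalClosure_eq_adjoin_rootSet_minpoly (L := AlgebraicClosure K)
    (fun _ => IsAlgClosed.splits _) hα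
  have : IsSplittingField F (normalClosure F K (AlgebraicClosure K)) (minpoly F α) :=
    hN ▸ adjoin_rootSet_isSplittingField (IsAlgClosed.splits _)
  have : Group.IsSolvable Gal((minpoly F α).SplittingField/F) := h
  exact Group.isSolvable_of_isSolvable_injective
    (f := (IsSplittingField.algEquiv _ (minpoly F α)).autCongr.toMonoidHom)
    (AlgEquiv.autCongr _).injective

theorem isProsolvable_of_isSolvable_gal_minpoly [CharZero F]
    (h : ∀ x : K, IsIntegral F x → Group.IsSolvable (minpoly F x).Gal) : IsProsolvable F K := by
  intro L₀ _
  obtain ⟨α, hα⟩ := Field.exists_primitive_element F L₀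
  refine isSolvableExtension_of_adjoin_simple_eq_top hα ?_
  rw [← minpoly.algebraMap_eq (algebraMap L₀ K).injective α]
  exact h _ ((Algebra.IsIntegral.isIntegral α).map (IsScalarTower.toAlgHom F L₀ K))

end Prosolvable

theorem solvableByRad.isSquare_of_nonneg {F : Type*} [Field F] [Algebra F ℝ]
    {x : solvableByRad F ℝ} (hx : 0 ≤ x) : IsSquare x :=
  ⟨⟨√x, solvableByRad.rad_mem two_ne_zero (by rw [Real.sq_sqrt hx]; exact x.2)⟩,
    Subtype.ext (Real.mul_self_sqrt hx).symm⟩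

/-- There is a prosolvable extension `K` of `ℚ` that has a field extension of degree `2`, yet
the quadratic form `⟨1,1⟩`, i.e. `(x,y) ↦ x² + y²`, is not isomorphic to a scaled trace form
over `K` (one may take `K = ℚ_sol ∩ ℝ`). -/
theorem exists_prosolvable_extension_sumSquares_not_scaledTraceForm :
    ∃ (K : Type) (_ : Field K) (_ : Algebra ℚ K), IsProsolvable ℚ K ∧
      (∃ (L : Type) (_ : Field L) (_ : Algebra K L),
        FiniteDimensional K L ∧ Module.finrank K L = 2) ∧
      ¬ IsScaledTraceForm ((1 : Matrix (Fin 2) (Fin 2) K).toQuadraticMap') := by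
  let K := solvableByRad ℚ ℝ
  -- makes `QuadraticAlgebra K (-1) 0 = K(i)` a field
  have : Fact (∀ r : K, r ^ 2 ≠ -1 + 0 * r) := ⟨fun r => by nlinarith [sq_nonneg r]⟩
  refine ⟨K, inferInstance, inferInstance, ?_,
    ⟨QuadraticAlgebra K (-1) 0, inferInstance, inferInstance, inferInstance,
      QuadraticAlgebra.finrank_eq_two _ _⟩,
    not_isScaledTraceForm_sumSquares fun _ => solvableByRad.isSquare_of_nonneg⟩
  exact isProsolvable_of_isSolvable_gal_minpoly fun x _ =>
    minpoly.algebraMap_eq (A := ℚ) (algebraMap K ℝ).injective x ▸ isSolvable_gal_minpoly x.2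
end

section
/- Let ℚ_sol be the maximal prosolvable extension of ℚ inside ℂ (the compositum of all finite solvable Galois extensions of ℚ contained in ℂ), and let K = ℚ_sol ∩ ℝ. Then [ℚ_sol : K] = 2, and ℚ_sol is the unique degree-2 extension of K: every field extension L/K of degree 2 is K-isomorphic to ℚ_sol. -/
open IntermediateField

/-- The maximal prosolvable extension of `ℚ` inside `ℂ`: the compositum of all finite solvable
Galois extensions of `ℚ` contained in `ℂ`. -/
noncomputable def QSol : IntermediateField ℚ ℂ :=
  ⨆ (L : IntermediateField ℚ ℂ) (_ : FiniteDimensional ℚ L ∧ IsGalois ℚ L ∧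
    IsSolvable (L ≃ₐ[ℚ] L)), L

/-- The subfield `ℝ` of `ℂ`, as an intermediate field of `ℂ/ℚ`. -/
noncomputable def RealsInComplex : IntermediateField ℚ ℂ :=
  Subfield.toIntermediateField Complex.ofRealHom.fieldRange fun x =>
    ⟨(x : ℝ), rfl⟩

/-- `K = ℚ_sol ∩ ℝ` (the fixed field of complex conjugation on `ℚ_sol`). -/
noncomputable def QSolReal : IntermediateField ℚ ℂ := QSol ⊓ RealsInComplex

/-!
`ℚ_sol` is closed under complex conjugation (an automorphism preserves minimal polynomials)
and under square roots: if `p` is the minimal polynomial of `x`, the minimal polynomial of `√x`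
divides `p(X²)`, and over the splitting field of `p` this polynomial factors into binomials
`X² - a`, so its Galois group is solvable. Hence `ℚ_sol = K(i)` has degree `2` over `K`, and
every element of `K` is a square in `ℚ_sol`. A quadratic extension `L/K` is `K(α)` for a root `α`
of a quadratic whose discriminant is a square in `ℚ_sol`, so `L` embeds into `ℚ_sol`, and the
embedding is onto because both have degree `2` over `K`.
-/

open Polynomial ComplexConjugate

section Quadratic

variable {K L E : Type*} [Field K] [Field L] [Field E] [Algebra K L] [Algebra K E]

theorem Polynomial.exists_aeval_eq_zero_of_natDegree_eq_two [NeZero (2 : E)] {p : K[X]}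
    (hp : p.natDegree = 2)
    (hd : IsSquare (algebraMap K E (discrim (p.coeff 2) (p.coeff 1) (p.coeff 0)))) :
    ∃ x : E, aeval x p = 0 := by
  have ha : algebraMap K E (p.coeff 2) ≠ 0 := by
    refine (_root_.map_ne_zero _).mpr ?_
    rw [← hp]
    exact leadingCoeff_ne_zero.mpr (ne_zero_of_natDegree_gt (hp ▸ two_pos))
  obtain ⟨s, hs⟩ := hd
  obtain ⟨x, hx⟩ := exists_quadratic_eq_zero (b := algebraMap K E (p.coeff 1))
    (c := algebraMap K E (p.coeff 0)) ha ⟨s, by simpa [discrim, map_ofNat] using hs⟩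
  refine ⟨x, ?_⟩
  rw [eq_quadratic_of_degree_le_two (natDegree_le_iff_degree_le.mp hp.le)]
  simp only [map_add, map_mul, aeval_C, aeval_X_pow, aeval_X]
  linear_combination hx

theorem nonempty_algEquiv_of_finrank_eq_two [CharZero K] (hL : Module.finrank K L = 2)
    (hE : Module.finrank K E = 2) (hsq : ∀ a : K, IsSquare (algebraMap K E a)) :
    Nonempty (L ≃ₐ[K] E) := by
  have : FiniteDimensional K L := Module.finite_of_finrank_eq_succ hL
  have : FiniteDimensional K E := Module.finite_of_finrank_eq_succ hE
  have : CharZero E := charZero_of_injective_algebraMap (algebraMap K E).injective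
  let pb := Field.powerBasisOfFiniteOfSeparable K L
  have hdeg : (minpoly K pb.gen).natDegree = 2 := by
    rw [pb.natDegree_minpoly, ← pb.finrank, hL]
  obtain ⟨x, hx⟩ := exists_aeval_eq_zero_of_natDegree_eq_two hdeg (hsq _)
  let f := pb.lift x hx
  have hsurj : Function.Surjective f :=
    (LinearMap.injective_iff_surjective_of_finrank_eq_finrank (hL.trans hE.symm)
      (f := f.toLinearMap)).mp f.injective
  exact ⟨AlgEquiv.ofBijective f ⟨f.injective, hsurj⟩⟩

end Quadratic

theorem Polynomial.gal_comp_X_pow_isSolvable {F : Type*} [Field F] {p : F[X]} {n : ℕ}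
    (hn : n ≠ 0) (hp : Group.IsSolvable p.Gal) : Group.IsSolvable (p.comp (X ^ n)).Gal := by
  refine gal_isSolvable_tower p _
    (Gal.splits_in_splittingField_of_comp _ _ (by rwa [natDegree_X_pow])) hp ?_
  obtain ⟨s, hs⟩ := splits_iff_exists_multiset.1 (SplittingField.splits p)
  rw [map_comp, Polynomial.map_pow, map_X, hs, mul_comp, C_comp, multiset_prod_comp]
  refine gal_mul_isSolvable (gal_C_isSolvable _) (gal_prod_isSolvable fun q hq => ?_)
  obtain ⟨r, hr, rfl⟩ := Multiset.mem_map.mp hq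
  obtain ⟨a, -, rfl⟩ := Multiset.mem_map.mp hr
  rw [sub_comp, X_comp, C_comp]
  exact gal_X_pow_sub_C_isSolvable n a

theorem isSolvable_gal_minpoly_of_pow {F E : Type*} [Field F] [Field E] [Algebra F E] {α : E}
    {n : ℕ} (hn : n ≠ 0) (h : Group.IsSolvable (minpoly F (α ^ n)).Gal) :
    Group.IsSolvable (minpoly F α).Gal := by
  by_cases hα : IsIntegral F α
  · have hne : (minpoly F (α ^ n)).comp (X ^ n) ≠ 0 := by
      refine fun h0 => (comp_eq_zero_iff.mp h0).elim (minpoly.ne_zero (hα.pow n)) fun h' => hn ?_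
      rw [← natDegree_X_pow (R := F) n, h'.2, natDegree_C]
    have hdvd : minpoly F α ∣ (minpoly F (α ^ n)).comp (X ^ n) :=
      minpoly.dvd F α (by rw [aeval_comp, aeval_X_pow, minpoly.aeval])
    have := gal_comp_X_pow_isSolvable hn h
    exact Group.isSolvable_of_surjective (Gal.restrictDvd_surjective hdvd hne)
  · rw [minpoly.eq_zero hα]
    exact gal_zero_isSolvable

section SolvableClosure

variable (F Ω : Type*) [Field F] [Field Ω] [Algebra F Ω]

def IntermediateField.IsSolvableGalois (L : IntermediateField F Ω) : Prop :=
  FiniteDimensional F L ∧ IsGalois F L ∧ Group.IsSolvable (L ≃ₐ[F] L)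

def solvableClosure : IntermediateField F Ω :=
  ⨆ (L : IntermediateField F Ω) (_ : L.IsSolvableGalois), L

variable {F Ω}

theorem isSolvableGalois_adjoin_rootSet [PerfectField F] {p : F[X]}
    (hsplit : (p.map (algebraMap F Ω)).Splits) (hp : Group.IsSolvable p.Gal) :
    (adjoin F (p.rootSet Ω)).IsSolvableGalois := by
  have := adjoin_rootSet_isSplittingField hsplit
  have : FiniteDimensional F (adjoin F (p.rootSet Ω)) := IsSplittingField.finiteDimensional _ p
  have : Normal F (adjoin F (p.rootSet Ω)) := Normal.of_isSplittingField p
  have : Group.IsSolvable (p.SplittingField ≃ₐ[F] p.SplittingField) := hp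
  let e := (IsSplittingField.algEquiv (adjoin F (p.rootSet Ω)) p).autCongr
  exact ⟨inferInstance, ⟨⟩,
    Group.isSolvable_of_isSolvable_injective (f := e.toMonoidHom) e.injective⟩

theorem IntermediateField.IsSolvableGalois.exists_eq_adjoin_rootSet {L : IntermediateField F Ω}
    (hL : L.IsSolvableGalois) :
    ∃ p : F[X], p ≠ 0 ∧ Group.IsSolvable p.Gal ∧ L = adjoin F (p.rootSet Ω) := by
  obtain ⟨hfin, hgal, hsol⟩ := hL
  obtain ⟨p, hsep, hp⟩ := IsGalois.is_separable_splitting_field F L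
  let e := (IsSplittingField.algEquiv L p).symm.autCongr
  exact ⟨p, hsep.ne_zero,
    Group.isSolvable_of_isSolvable_injective (f := e.toMonoidHom) e.injective,
    (isSplittingField_iff.mp hp).2⟩

theorem IntermediateField.IsSolvableGalois.isSolvable_gal_minpoly {L : IntermediateField F Ω}
    (hL : L.IsSolvableGalois) {x : Ω} (hx : x ∈ L) : Group.IsSolvable (minpoly F x).Gal := by
  obtain ⟨hfin, hgal, hsol⟩ := hL
  have hmin : minpoly F x = minpoly F (⟨x, hx⟩ : L) :=
    minpoly.algHom_eq L.val Subtype.val_injective ⟨x, hx⟩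
  have : Fact ((minpoly F x).map (algebraMap F L)).Splits :=
    ⟨hmin ▸ Normal.splits inferInstance _⟩
  exact Group.isSolvable_of_surjective (Gal.restrict_surjective (minpoly F x) L)

variable [PerfectField F] [IsAlgClosed Ω]

theorem directed_isSolvableGalois :
    Directed (· ≤ ·) (fun L : {L : IntermediateField F Ω // L.IsSolvableGalois} => L.1) := by
  rintro ⟨L₁, h₁⟩ ⟨L₂, h₂⟩
  obtain ⟨p₁, hp₁, hs₁, rfl⟩ := h₁.exists_eq_adjoin_rootSet
  obtain ⟨p₂, hp₂, hs₂, rfl⟩ := h₂.exists_eq_adjoin_rootSet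
  refine ⟨⟨_, isSolvableGalois_adjoin_rootSet (IsAlgClosed.splits _)
    (gal_mul_isSolvable hs₁ hs₂)⟩, adjoin.mono _ _ _ fun x hx => ?_,
    adjoin.mono _ _ _ fun x hx => ?_⟩ <;>
  rw [mem_rootSet] at hx ⊢ <;>
  simp [hp₁, hp₂, hx.2]

theorem mem_solvableClosure_iff_exists {x : Ω} :
    x ∈ solvableClosure F Ω ↔
      ∃ L : IntermediateField F Ω, L.IsSolvableGalois ∧ x ∈ L := by
  have : Nonempty {L : IntermediateField F Ω // L.IsSolvableGalois} :=
    ⟨⟨_, isSolvableGalois_adjoin_rootSet (p := X) (IsAlgClosed.splits _) gal_X_isSolvable⟩⟩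
  rw [solvableClosure, iSup_subtype', ← SetLike.mem_coe,
    coe_iSup_of_directed directed_isSolvableGalois]
  simp

theorem mem_solvableClosure_iff {x : Ω} :
    x ∈ solvableClosure F Ω ↔ IsIntegral F x ∧ Group.IsSolvable (minpoly F x).Gal := by
  rw [mem_solvableClosure_iff_exists]
  constructor
  · rintro ⟨L, hL, hx⟩
    have := hL.1
    exact ⟨(IsIntegral.of_finite F (⟨x, hx⟩ : L)).map L.val, hL.isSolvable_gal_minpoly hx⟩
  · rintro ⟨hint, hsol⟩
    refine ⟨_, isSolvableGalois_adjoin_rootSet (IsAlgClosed.splits _) hsol,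
      subset_adjoin _ _ (mem_rootSet.mpr ⟨minpoly.ne_zero hint, minpoly.aeval F x⟩)⟩

theorem mem_solvableClosure_of_pow_mem {x : Ω} {n : ℕ} (hn : n ≠ 0)
    (hx : x ^ n ∈ solvableClosure F Ω) : x ∈ solvableClosure F Ω := by
  obtain ⟨hint, hsol⟩ := mem_solvableClosure_iff.mp hx
  exact mem_solvableClosure_iff.mpr
    ⟨hint.of_pow (Nat.pos_of_ne_zero hn), isSolvable_gal_minpoly_of_pow hn hsol⟩

theorem map_mem_solvableClosure (σ : Ω →ₐ[F] Ω) {x : Ω} (hx : x ∈ solvableClosure F Ω) :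
    σ x ∈ solvableClosure F Ω := by
  obtain ⟨hint, hsol⟩ := mem_solvableClosure_iff.mp hx
  rw [mem_solvableClosure_iff, minpoly.algHom_eq σ σ.injective]
  exact ⟨hint.map σ, hsol⟩

end SolvableClosure

theorem QSol_eq_solvableClosure : QSol = solvableClosure ℚ ℂ := rfl

theorem mem_QSol_of_sq_mem {z : ℂ} (hz : z ^ 2 ∈ QSol) : z ∈ QSol := by
  rw [QSol_eq_solvableClosure] at hz ⊢
  exact mem_solvableClosure_of_pow_mem two_ne_zero hz

theorem I_mem_QSol : Complex.I ∈ QSol :=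
  mem_QSol_of_sq_mem (by rw [Complex.I_sq]; exact neg_mem (one_mem _))

theorem conj_mem_QSol {z : ℂ} (hz : z ∈ QSol) : conj z ∈ QSol := by
  rw [QSol_eq_solvableClosure] at hz ⊢
  exact map_mem_solvableClosure (Complex.conjAe.toAlgHom.restrictScalars ℚ) hz

theorem mem_realsInComplex_iff {z : ℂ} : z ∈ RealsInComplex ↔ z.im = 0 :=
  ⟨by rintro ⟨r, rfl⟩; exact Complex.ofReal_im r,
    fun h => ⟨z.re, Complex.ext rfl h.symm⟩⟩

section ConjStable

variable {M : IntermediateField ℚ ℂ}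

theorem ofReal_mem_inf_realsInComplex {r : ℝ} (hr : (r : ℂ) ∈ M) :
    (r : ℂ) ∈ M ⊓ RealsInComplex :=
  mem_inf.mpr ⟨hr, mem_realsInComplex_iff.mpr (Complex.ofReal_im r)⟩

theorem ofReal_re_mem_of_conj_mem (hconj : ∀ z ∈ M, conj z ∈ M) {z : ℂ} (hz : z ∈ M) :
    (z.re : ℂ) ∈ M := by
  rw [Complex.re_eq_add_conj]
  exact div_mem (add_mem hz (hconj z hz)) (ofNat_mem M 2)

theorem ofReal_im_mem_of_conj_mem (hconj : ∀ z ∈ M, conj z ∈ M) (hI : Complex.I ∈ M)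
    {z : ℂ} (hz : z ∈ M) : (z.im : ℂ) ∈ M := by
  rw [Complex.im_eq_sub_conj]
  exact div_mem (sub_mem hz (hconj z hz)) (mul_mem (ofNat_mem M 2) hI)

theorem finrank_extendScalars_inf_realsInComplex (hconj : ∀ z ∈ M, conj z ∈ M)
    (hI : Complex.I ∈ M) :
    Module.finrank ↥(M ⊓ RealsInComplex)
      ↥(extendScalars (inf_le_left : M ⊓ RealsInComplex ≤ M)) = 2 := by
  set K := M ⊓ RealsInComplex
  set E := extendScalars (inf_le_left : K ≤ M)
  have hli : LinearIndependent K ![(1 : E), ⟨Complex.I, hI⟩] := by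
    refine LinearIndependent.pair_iff.mpr fun s t hst => ?_
    have h : (s : ℂ) * 1 + t * Complex.I = 0 := congrArg Subtype.val hst
    have hs := mem_realsInComplex_iff.mp (mem_inf.mp s.2).2
    have ht := mem_realsInComplex_iff.mp (mem_inf.mp t.2).2
    constructor <;> ext <;> apply Complex.ext <;> simp_all [Complex.ext_iff]
  have hsp : ⊤ ≤ Submodule.span K (Set.range ![(1 : E), ⟨Complex.I, hI⟩]) := by
    rintro v -
    rw [Matrix.range_cons_cons_empty, Submodule.mem_span_pair]
    refine ⟨⟨_, ofReal_mem_inf_realsInComplex (ofReal_re_mem_of_conj_mem hconj v.2)⟩,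
      ⟨_, ofReal_mem_inf_realsInComplex (ofReal_im_mem_of_conj_mem hconj hI v.2)⟩,
      Subtype.ext ?_⟩
    change ((v : ℂ).re : ℂ) * 1 + ((v : ℂ).im : ℂ) * Complex.I = v
    rw [mul_one, Complex.re_add_im]
  rw [Module.finrank_eq_card_basis (Module.Basis.mk hli hsp), Fintype.card_fin]

end ConjStable

/-- Let `K = ℚ_sol ∩ ℝ`. Then `[ℚ_sol : K] = 2` and `ℚ_sol` is the unique degree-`2` extension
of `K`: every field extension `L/K` of degree `2` is `K`-isomorphic to `ℚ_sol`. -/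
theorem qsol_unique_quadratic_extension :
    Module.finrank ↥QSolReal
      ↥(IntermediateField.extendScalars (F := QSolReal) (E := QSol) (inf_le_left : QSolReal ≤ QSol)) = 2 ∧
    ∀ (L : Type) [Field L] [Algebra ↥QSolReal L], Module.finrank ↥QSolReal L = 2 →
      Nonempty (L ≃ₐ[↥QSolReal]
        ↥(IntermediateField.extendScalars (F := QSolReal) (E := QSol) (inf_le_left : QSolReal ≤ QSol))) := by
  have hrank := finrank_extendScalars_inf_realsInComplex (fun _ => conj_mem_QSol) I_mem_QSol
  refine ⟨hrank, fun L _ _ hL => nonempty_algEquiv_of_finrank_eq_two hL hrank fun a => ?_⟩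
  obtain ⟨s, hs⟩ := IsAlgClosed.exists_pow_nat_eq (a : ℂ) two_pos
  exact ⟨⟨s, mem_QSol_of_sq_mem (hs ▸ (mem_inf.mp a.2).1)⟩,
    Subtype.ext (by simp [← hs, sq])⟩
end
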